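/- Let h₁, h₂ ∈ 𝔻ℍ be real dual quaternions with h₁² = h₂² = −1. The intersection of the left ideal 𝔻ℍ_ℂ·(i + h₁) with the right ideal (i − h₂)·𝔻ℍ_ℂ is a free 𝔻_ℂ-module of rank 1. -/

import Mathlib

/-- complexification of a real quaternion -/
noncomputable def quatC (q : Quaternion ℝ) : Quaternion ℂ :=
  ⟨(q.re : ℂ), (q.imI : ℂ), (q.imJ : ℂ), (q.imK : ℂ)⟩

/-- complexification `𝔻ℍ → 𝔻ℍ_ℂ` of a real dual quaternion -/
noncomputable def dualQuatC (d : DualNumber (Quaternion ℝ)) : DualNumber (Quaternion ℂ) :=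
  (quatC d.fst, quatC d.snd)

/-- embedding of the complex dual numbers `𝔻_ℂ = ℂ[ε]/(ε²)` into `𝔻ℍ_ℂ` (central scalars) -/
noncomputable def scalarDQ (c : DualNumber ℂ) : DualNumber (Quaternion ℂ) :=
  ((c.fst : Quaternion ℂ), (c.snd : Quaternion ℂ))

/-- the central complex unit `i` in `𝔻ℍ_ℂ` -/
noncomputable def iDQ : DualNumber (Quaternion ℂ) := ((Complex.I : Quaternion ℂ), 0)

/-!
Put `τ = 2i`. Then `P = i + h₁` and `Q = i - h₂` satisfy `P² = τP` and `Q² = τQ` with `τ` a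
central unit, so `𝔻ℍ_ℂ·P = {x | xP = τx}`, `Q·𝔻ℍ_ℂ = {x | Qx = τx}`, and the intersection is
the Peirce corner of the idempotents `P/τ`, `Q/τ`.

On the leading parts `A = P₀`, `B = Q₀ ∈ ℍ_ℂ` realness enters: a real quaternion squaring to `-1`
is purely imaginary, so `A` and `B` have real part `i` and `star A = τ - A`, `star B = τ - B`.
Then any `x, y` in the corner of `ℍ_ℂ` satisfy `x ȳ = ȳ x = 0`, which forces them to be
proportional, and since `ℍ_ℂ` is a prime ring the corner contains some `B u A ≠ 0`; it is the line
`ℂ·B u A`. An element `x` of the dual corner agrees with `c₀·(Q u P)` modulo `ε` for some `c₀ ∈ ℂ`,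
and `x - c₀·(Q u P)` is `ε` times an element of the quaternion corner, so the dual corner is free
over `𝔻_ℂ` on `Q u P`.
-/

section Corner

variable {R : Type*} [Ring R] {τ σ P Q x : R}

/-- When `P = τ e` and `Q = τ f` for idempotents `e, f` and a central unit `τ`, this is the
Peirce corner `f R e`. -/
def corner (τ Q P : R) : Set R := {x | x * P = τ * x ∧ Q * x = τ * x}

theorem exists_eq_mul_right_iff_of_mul_self (hτ : IsUnit τ) (hτc : ∀ y, Commute τ y)
    (hP : P * P = τ * P) : (∃ a, x = a * P) ↔ x * P = τ * x := by
  constructor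
  · rintro ⟨a, rfl⟩
    rw [mul_assoc, hP, ← mul_assoc, ← (hτc a).eq, mul_assoc]
  · intro h
    refine ⟨↑hτ.unit⁻¹ * x, ?_⟩
    rw [mul_assoc, h, ← mul_assoc, IsUnit.val_inv_mul, one_mul]

theorem exists_eq_mul_left_iff_of_mul_self (hτ : IsUnit τ) (hτc : ∀ y, Commute τ y)
    (hP : P * P = τ * P) : (∃ a, x = P * a) ↔ P * x = τ * x := by
  constructor
  · rintro ⟨a, rfl⟩
    rw [← mul_assoc, hP, mul_assoc]
  · intro h
    refine ⟨↑hτ.unit⁻¹ * x, ?_⟩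
    have hinv : Commute P ↑hτ.unit⁻¹ := ((hτc P).units_inv_left (u := hτ.unit)).symm
    rw [← mul_assoc, hinv.eq, mul_assoc, h, ← mul_assoc, IsUnit.val_inv_mul, one_mul]

theorem Commute.add_mul_self_of_mul_self_eq_neg_one {s h : R} (hsh : Commute s h)
    (hs : s * s = -1) (hh : h * h = -1) : (s + h) * (s + h) = 2 * s * (s + h) := by
  rw [← sub_eq_zero]
  calc (s + h) * (s + h) - 2 * s * (s + h) = (h * s - s * h) + (h * h - s * s) := by noncomm_ring
    _ = 0 := by rw [hsh.eq, hs, hh, sub_self, sub_self, add_zero]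

theorem mul_mem_corner (hτ : ∀ y, Commute τ y) (hσ : ∀ y, Commute σ y)
    (hx : x ∈ corner τ Q P) : σ * x ∈ corner τ Q P :=
  ⟨by rw [mul_assoc, hx.1, ← mul_assoc, ← (hτ σ).eq, mul_assoc],
    by rw [← mul_assoc, ← (hσ Q).eq, mul_assoc, hx.2, ← mul_assoc, ← (hτ σ).eq, mul_assoc]⟩

theorem sub_mem_corner {y : R} (hx : x ∈ corner τ Q P) (hy : y ∈ corner τ Q P) :
    x - y ∈ corner τ Q P :=
  ⟨by rw [sub_mul, mul_sub, hx.1, hy.1], by rw [mul_sub, mul_sub, hx.2, hy.2]⟩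

theorem mul_mul_mem_corner (hτ : ∀ y, Commute τ y) (hP : P * P = τ * P) (hQ : Q * Q = τ * Q)
    (w : R) : Q * w * P ∈ corner τ Q P :=
  ⟨by rw [mul_assoc, hP, ← mul_assoc, ← (hτ _).eq, mul_assoc],
    by rw [← mul_assoc, ← mul_assoc, hQ, mul_assoc, mul_assoc, mul_assoc]⟩

end Corner

namespace DualNumber

open TrivSqZeroExt

variable {S R : Type*} [Field S] [Ring R] [Algebra S R]

theorem commute_inl {r : R} (hr : ∀ y, Commute r y) (x : R[ε]) : Commute (inl r) x := by
  ext
  · simp [(hr x.fst).eq]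
  · simp [(hr x.snd).eq]

theorem commute_inr {m : R} (hm : ∀ y, Commute m y) (x : R[ε]) : Commute (inr m) x := by
  ext
  · simp
  · simp [(hm x.fst).eq]

theorem commute_inl_algebraMap_add_inr (c : S[ε]) (x : R[ε]) :
    Commute (inl (algebraMap S R c.fst) + inr (algebraMap S R c.snd)) x :=
  (commute_inl (Algebra.commute_algebraMap_left _) x).add_left
    (commute_inr (Algebra.commute_algebraMap_left _) x)

theorem eq_zero_of_inl_add_inr_mul_eq_zero {b : R[ε]} (hb : b.fst ≠ 0) {c : S[ε]}
    (h : (inl (algebraMap S R c.fst) + inr (algebraMap S R c.snd)) * b = 0) : c = 0 := by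
  have h₀ : c.fst • b.fst = 0 := by
    simpa only [Algebra.smul_def, fst_mul, fst_add, fst_inl, fst_inr, add_zero, fst_zero] using
      congrArg fst h
  have hc₀ : c.fst = 0 := (smul_eq_zero.mp h₀).resolve_right hb
  have h₁ : c.snd • b.fst = 0 := by
    simpa only [Algebra.smul_def, snd_mul, fst_add, snd_add, fst_inl, snd_inl, fst_inr, snd_inr,
      hc₀, map_zero, zero_mul, zero_add, add_zero, snd_zero] using congrArg snd h
  exact TrivSqZeroExt.ext hc₀ ((smul_eq_zero.mp h₁).resolve_right hb)

variable {τ P Q x : R[ε]}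

theorem fst_mem_corner (hx : x ∈ corner τ Q P) : x.fst ∈ corner τ.fst Q.fst P.fst :=
  ⟨by simpa using congrArg fst hx.1, by simpa using congrArg fst hx.2⟩

theorem snd_mem_corner_of_fst_eq_zero (hx : x ∈ corner τ Q P) (hx₀ : x.fst = 0) :
    x.snd ∈ corner τ.fst Q.fst P.fst :=
  ⟨by simpa [snd_mul, hx₀] using congrArg snd hx.1,
    by simpa [snd_mul, hx₀] using congrArg snd hx.2⟩

theorem mem_corner_iff_exists_eq_mul (hτ : ∀ y, Commute τ y) (hP : P * P = τ * P)
    (hQ : Q * Q = τ * Q) {u : R}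
    (hspan : ∀ z ∈ corner τ.fst Q.fst P.fst,
      ∃ c : S, z = algebraMap S R c * (Q.fst * u * P.fst)) :
    x ∈ corner τ Q P ↔ ∃ c : S[ε],
      x = (inl (algebraMap S R c.fst) + inr (algebraMap S R c.snd)) * (Q * inl u * P) := by
  have hb := mul_mul_mem_corner hτ hP hQ (inl u)
  refine ⟨fun hx => ?_,
    fun ⟨c, hc⟩ => hc ▸ mul_mem_corner hτ (commute_inl_algebraMap_add_inr c) hb⟩
  obtain ⟨c₀, hc₀⟩ := hspan x.fst (fst_mem_corner hx)
  set x' := x - inl (algebraMap S R c₀) * (Q * inl u * P) with hx'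
  have hx'₀ : x'.fst = 0 := by simp [hx', hc₀]
  obtain ⟨c₁, hc₁⟩ := hspan x'.snd <| snd_mem_corner_of_fst_eq_zero
    (sub_mem_corner hx (mul_mem_corner hτ (commute_inl (Algebra.commute_algebraMap_left _)) hb))
    hx'₀
  refine ⟨(c₀, c₁), ?_⟩
  rw [← sub_add_cancel x (inl (algebraMap S R c₀) * (Q * inl u * P)), ← hx']
  ext
  · simp [hx'₀]
  · simp [hc₁, Algebra.smul_def, algebraMap_eq_inl', add_comm]

end DualNumber

namespace Quaternion

theorem re_eq_zero_of_mul_self_eq_neg_one {R : Type*} [CommRing R] [LinearOrder R]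
    [IsStrictOrderedRing R] {p : ℍ[R]} (hp : p * p = -1) : p.re = 0 := by
  have h₀ := congrArg QuaternionAlgebra.re hp
  have h₁ := congrArg QuaternionAlgebra.imI hp
  have h₂ := congrArg QuaternionAlgebra.imJ hp
  have h₃ := congrArg QuaternionAlgebra.imK hp
  simp only [re_mul, imI_mul, imJ_mul, imK_mul, re_neg, imI_neg, imJ_neg, imK_neg, re_one,
    imI_one, imJ_one, imK_one] at h₀ h₁ h₂ h₃
  nlinarith [sq_nonneg p.re, sq_nonneg p.imI, sq_nonneg p.imJ, sq_nonneg p.imK]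

variable {K : Type*} [Field K]

theorem coe_four_mul_re (x : ℍ[K]) :
    ((4 * x.re : K) : ℍ[K]) =
      x - (equivTuple K).symm ![0, 1, 0, 0] * x * (equivTuple K).symm ![0, 1, 0, 0]
        - (equivTuple K).symm ![0, 0, 1, 0] * x * (equivTuple K).symm ![0, 0, 1, 0]
        - (equivTuple K).symm ![0, 0, 0, 1] * x * (equivTuple K).symm ![0, 0, 0, 1] := by
  ext <;> simp only [re_mul, imI_mul, imJ_mul, imK_mul, re_sub, imI_sub, imJ_sub, imK_sub] <;>
    simp
  ring

theorem exists_mul_mul_ne_zero [CharZero K] {a b : ℍ[K]} (ha : a ≠ 0) (hb : b ≠ 0) :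
    ∃ u, a * u * b ≠ 0 := by
  by_contra! h
  have hab : a * b = 0 := by simpa using h 1
  have hre : ∀ w, (b * w).re = 0 := by
    intro w
    have h4 : a * ((4 * (b * w).re : K) : ℍ[K]) = 0 := by
      simp only [coe_four_mul_re, mul_sub, ← mul_assoc, h, hab, zero_mul, sub_zero]
    rw [mul_coe_eq_smul, smul_eq_zero] at h4
    simpa using h4.resolve_right ha
  have hre' : ∀ v : Fin 4 → K, b.re * v 0 - b.imI * v 1 - b.imJ * v 2 - b.imK * v 3 = 0 :=
    fun v => by
      have h := hre ((equivTuple K).symm v)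
      rwa [re_mul] at h
  apply hb
  ext
  · simpa using hre' ![1, 0, 0, 0]
  · simpa using hre' ![0, 1, 0, 0]
  · simpa using hre' ![0, 0, 1, 0]
  · simpa using hre' ![0, 0, 0, 1]

theorem smul_eq_smul_of_mul_star_eq_zero [CharZero K] {x y : ℍ[K]} (h₁ : x * star y = 0)
    (h₂ : star y * x = 0) :
    x.re • y = y.re • x ∧ x.imI • y = y.imI • x ∧ x.imJ • y = y.imJ • x ∧
      x.imK • y = y.imK • x := by
  have m₁ := congrArg QuaternionAlgebra.imI h₁
  have m₂ := congrArg QuaternionAlgebra.imJ h₁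
  have m₃ := congrArg QuaternionAlgebra.imK h₁
  have n₁ := congrArg QuaternionAlgebra.imI h₂
  have n₂ := congrArg QuaternionAlgebra.imJ h₂
  have n₃ := congrArg QuaternionAlgebra.imK h₂
  simp only [imI_mul, imJ_mul, imK_mul, re_star, imI_star, imJ_star, imK_star, imI_zero,
    imJ_zero, imK_zero] at m₁ m₂ m₃ n₁ n₂ n₃
  refine ⟨?_, ?_, ?_, ?_⟩ <;> ext <;>
    simp only [re_smul, imI_smul, imJ_smul, imK_smul, smul_eq_mul] <;> grind

theorem exists_eq_smul_of_mul_star_eq_zero [CharZero K] {x y : ℍ[K]} (h₁ : x * star y = 0)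
    (h₂ : star y * x = 0) (hy : y ≠ 0) : ∃ c : K, x = c • y := by
  have of_smul_eq_smul : ∀ {a b : K}, a • y = b • x → b ≠ 0 → ∃ c : K, x = c • y :=
    fun h hb => ⟨_, by rw [mul_smul, h, inv_smul_smul₀ hb]⟩
  obtain ⟨h₀, hI, hJ, hK⟩ := smul_eq_smul_of_mul_star_eq_zero h₁ h₂
  have hcoord : y.re ≠ 0 ∨ y.imI ≠ 0 ∨ y.imJ ≠ 0 ∨ y.imK ≠ 0 := by
    by_contra! h
    exact hy (by ext <;> simp [h])
  rcases hcoord with h | h | h | h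
  exacts [of_smul_eq_smul h₀ h, of_smul_eq_smul hI h, of_smul_eq_smul hJ h, of_smul_eq_smul hK h]

variable {A B x y : ℍ[K]} {t : K}

theorem mul_star_eq_zero_of_mem_corner (ht : t ≠ 0) (hA : star A = ↑t - A)
    (hB : star B = ↑t - B) (hx : x ∈ corner ↑t B A) (hy : y ∈ corner ↑t B A) :
    x * star y = 0 ∧ star y * x = 0 := by
  have hAy : A * star y = 0 := by
    have h := congrArg star hy.1
    rwa [star_mul, star_mul, hA, star_coe, sub_mul, ← coe_commutes, sub_eq_self] at h
  have hyB : star y * B = 0 := by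
    have h := congrArg star hy.2
    rwa [star_mul, star_mul, hB, star_coe, mul_sub, sub_eq_self] at h
  have cancel : ∀ z : ℍ[K], ↑t * z = 0 → z = 0 := fun z hz => by
    rwa [coe_mul_eq_smul, smul_eq_zero, or_iff_right ht] at hz
  constructor
  · exact cancel _ (by rw [← mul_assoc, ← hx.1, mul_assoc, hAy, mul_zero])
  · exact cancel _
      (by rw [← mul_assoc, coe_commutes, mul_assoc, ← hx.2, ← mul_assoc, hyB, zero_mul])

theorem exists_corner_generator [CharZero K] (ht : t ≠ 0) (hA : star A = ↑t - A)
    (hB : star B = ↑t - B) (hAA : A * A = ↑t * A) (hBB : B * B = ↑t * B) (hA₀ : A ≠ 0)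
    (hB₀ : B ≠ 0) :
    ∃ u, B * u * A ≠ 0 ∧ ∀ z ∈ corner ↑t B A, ∃ c : K, z = ↑c * (B * u * A) := by
  obtain ⟨u, hu⟩ := exists_mul_mul_ne_zero hB₀ hA₀
  refine ⟨u, hu, fun z hz => ?_⟩
  obtain ⟨h₁, h₂⟩ := mul_star_eq_zero_of_mem_corner ht hA hB hz
    (mul_mul_mem_corner (fun _ => coe_commute _ _) hAA hBB u)
  obtain ⟨c, hc⟩ := exists_eq_smul_of_mul_star_eq_zero h₁ h₂ hu
  exact ⟨c, by rw [hc, coe_mul_eq_smul]⟩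

end Quaternion

section Complexification

open Quaternion TrivSqZeroExt

@[simp] theorem quatC_re (q : ℍ[ℝ]) : (quatC q).re = q.re := rfl
@[simp] theorem quatC_imI (q : ℍ[ℝ]) : (quatC q).imI = q.imI := rfl
@[simp] theorem quatC_imJ (q : ℍ[ℝ]) : (quatC q).imJ = q.imJ := rfl
@[simp] theorem quatC_imK (q : ℍ[ℝ]) : (quatC q).imK = q.imK := rfl

theorem quatC_add (a b : ℍ[ℝ]) : quatC (a + b) = quatC a + quatC b := by
  ext <;> simp

theorem quatC_mul (a b : ℍ[ℝ]) : quatC (a * b) = quatC a * quatC b := by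
  ext <;> simp [re_mul, imI_mul, imJ_mul, imK_mul]

theorem quatC_neg (a : ℍ[ℝ]) : quatC (-a) = -quatC a := by
  ext <;> simp

theorem quatC_one : quatC 1 = 1 := by
  ext <;> simp

theorem quatC_zero : quatC 0 = 0 := by
  ext <;> simp

@[simp] theorem fst_dualQuatC (d : DualNumber ℍ[ℝ]) : (dualQuatC d).fst = quatC d.fst := rfl
@[simp] theorem snd_dualQuatC (d : DualNumber ℍ[ℝ]) : (dualQuatC d).snd = quatC d.snd := rfl

theorem dualQuatC_mul (a b : DualNumber ℍ[ℝ]) :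
    dualQuatC (a * b) = dualQuatC a * dualQuatC b := by
  ext <;> simp [quatC_mul, quatC_add]

theorem dualQuatC_neg (a : DualNumber ℍ[ℝ]) : dualQuatC (-a) = -dualQuatC a := by
  ext <;> simp [quatC_neg]

theorem dualQuatC_one : dualQuatC 1 = 1 := by
  ext <;> simp [quatC_one, quatC_zero]

@[simp] theorem fst_iDQ : iDQ.fst = ((Complex.I : ℂ) : ℍ[ℂ]) := rfl
@[simp] theorem snd_iDQ : iDQ.snd = 0 := rfl

theorem iDQ_mul_self : iDQ * iDQ = -1 := by
  refine TrivSqZeroExt.ext ?_ (by simp)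
  rw [fst_mul, fst_iDQ, ← coe_mul, Complex.I_mul_I, coe_neg, coe_one, fst_neg, fst_one]

theorem commute_iDQ (x : DualNumber ℍ[ℂ]) : Commute iDQ x :=
  DualNumber.commute_inl (coe_commute _) x

theorem fst_two_mul_iDQ : (2 * iDQ).fst = ((2 * Complex.I : ℂ) : ℍ[ℂ]) := by
  rw [fst_mul, fst_iDQ, coe_mul]
  rfl

theorem commute_two_mul_iDQ (x : DualNumber ℍ[ℂ]) : Commute (2 * iDQ) x :=
  (Commute.ofNat_left 2 x).mul_left (commute_iDQ x)

theorem isUnit_two_mul_iDQ : IsUnit (2 * iDQ) := by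
  rw [isUnit_iff_isUnit_fst, fst_two_mul_iDQ, ← algebraMap_def]
  exact (IsUnit.mk0 _ (by simp)).map _

theorem scalarDQ_eq (c : DualNumber ℂ) :
    scalarDQ c = inl (algebraMap ℂ ℍ[ℂ] c.fst) + inr (algebraMap ℂ ℍ[ℂ] c.snd) := by
  ext <;> simp [algebraMap_def] <;> rfl

variable {h : DualNumber ℍ[ℝ]}

theorem iDQ_add_dualQuatC_mul_self (hh : h * h = -1) :
    (iDQ + dualQuatC h) * (iDQ + dualQuatC h) = 2 * iDQ * (iDQ + dualQuatC h) :=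
  (commute_iDQ _).add_mul_self_of_mul_self_eq_neg_one iDQ_mul_self
    (by rw [← dualQuatC_mul, hh, dualQuatC_neg, dualQuatC_one])

theorem fst_iDQ_add_dualQuatC_mul_self (hh : h * h = -1) :
    (iDQ + dualQuatC h).fst * (iDQ + dualQuatC h).fst =
      ((2 * Complex.I : ℂ) : ℍ[ℂ]) * (iDQ + dualQuatC h).fst := by
  have h₂ := congrArg fst (iDQ_add_dualQuatC_mul_self hh)
  rwa [fst_mul, fst_mul (2 * iDQ), fst_two_mul_iDQ] at h₂

theorem star_fst_iDQ_add_dualQuatC (hh : h * h = -1) :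
    star (iDQ + dualQuatC h).fst = ((2 * Complex.I : ℂ) : ℍ[ℂ]) - (iDQ + dualQuatC h).fst := by
  have hre : h.fst.re = 0 :=
    re_eq_zero_of_mul_self_eq_neg_one (by simpa using congrArg fst hh)
  rw [star_eq_two_re_sub]
  simp [hre]

theorem fst_iDQ_add_dualQuatC_ne_zero : (iDQ + dualQuatC h).fst ≠ 0 := by
  intro h₀
  have := congrArg (fun q : ℍ[ℂ] => q.re.im) h₀
  simp at this

end Complexification

/-- For real dual quaternions `h₁, h₂` with `h₁² = h₂² = -1`, the
intersection of the left ideal `𝔻ℍ_ℂ·(i + h₁)` with the right ideal `(i - h₂)·𝔻ℍ_ℂ`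
is a free `𝔻_ℂ`-module of rank 1. -/
theorem stmt_7
    (h₁ h₂ : DualNumber (Quaternion ℝ))
    (hh₁ : h₁ * h₁ = -1) (hh₂ : h₂ * h₂ = -1) :
    ∃ b : DualNumber (Quaternion ℂ),
      (∀ x : DualNumber (Quaternion ℂ),
          ((∃ a, x = a * (iDQ + dualQuatC h₁)) ∧ (∃ a, x = (iDQ - dualQuatC h₂) * a)) ↔
            ∃ c : DualNumber ℂ, x = scalarDQ c * b) ∧
      (∀ c : DualNumber ℂ, scalarDQ c * b = 0 → c = 0) := by
  have hh₂' : -h₂ * -h₂ = -1 := by rwa [neg_mul_neg]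
  obtain ⟨u, hu, hspan⟩ := Quaternion.exists_corner_generator (by simp)
    (star_fst_iDQ_add_dualQuatC hh₁) (star_fst_iDQ_add_dualQuatC hh₂')
    (fst_iDQ_add_dualQuatC_mul_self hh₁) (fst_iDQ_add_dualQuatC_mul_self hh₂')
    fst_iDQ_add_dualQuatC_ne_zero fst_iDQ_add_dualQuatC_ne_zero
  rw [sub_eq_add_neg, ← dualQuatC_neg]
  refine ⟨(iDQ + dualQuatC (-h₂)) * TrivSqZeroExt.inl u * (iDQ + dualQuatC h₁),
    fun x => ?_, fun c hc => ?_⟩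
  · rw [exists_eq_mul_right_iff_of_mul_self isUnit_two_mul_iDQ commute_two_mul_iDQ
        (iDQ_add_dualQuatC_mul_self hh₁),
      exists_eq_mul_left_iff_of_mul_self isUnit_two_mul_iDQ commute_two_mul_iDQ
        (iDQ_add_dualQuatC_mul_self hh₂')]
    simp only [scalarDQ_eq]
    exact DualNumber.mem_corner_iff_exists_eq_mul commute_two_mul_iDQ
      (iDQ_add_dualQuatC_mul_self hh₁) (iDQ_add_dualQuatC_mul_self hh₂')
      (fun z => by rw [fst_two_mul_iDQ]; exact hspan z)
  · rw [scalarDQ_eq] at hc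
    exact DualNumber.eq_zero_of_inl_add_inr_mul_eq_zero (by simpa using hu) hc
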